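/- Let R ≻ 0 and Q ⪰ 0, let (A,B) ∈ ℝ^{n×n} × ℝ^{n×m}, and let P₁, P₂ ⪰ 0. Then for every integer i ≥ 0: 𝓡^{(i)}_{A,B}(P₁) − 𝓡^{(i)}_{A,B}(P₂) = [Φ^{(0:i)}_{A,B}(P₁)]ᵀ (P₁ − P₂) Φ^{(0:i)}_{A,B}(P₂). -/

import Mathlib

open Matrix

/-- Spectral norm (operator 2-norm) of a real matrix. -/
noncomputable def spNorm {p q : ℕ} (M : Matrix (Fin p) (Fin q) ℝ) : ℝ :=
  ‖LinearMap.toContinuousLinearMap (Matrix.toEuclideanLin M)‖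

/-- The spectral radius of a real square matrix is `< 1`. -/
def StabMat {n : ℕ} (M : Matrix (Fin n) (Fin n) ℝ) : Prop :=
  ∀ μ ∈ spectrum ℂ (M.map (algebraMap ℝ ℂ)), ‖μ‖ < 1

/-- `(A, B)` is stabilizable. -/
def Stabilizable {n m : ℕ} (A : Matrix (Fin n) (Fin n) ℝ)
    (B : Matrix (Fin n) (Fin m) ℝ) : Prop :=
  ∃ K : Matrix (Fin m) (Fin n) ℝ, StabMat (A - B * K)

/-- Smallest (real) eigenvalue: `σ_min` for symmetric matrices. -/
noncomputable def minEig {k : ℕ} (M : Matrix (Fin k) (Fin k) ℝ) : ℝ :=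
  sInf (spectrum ℝ M)

/-- Largest (real) eigenvalue: `σ_max` for symmetric matrices. -/
noncomputable def maxEig {k : ℕ} (M : Matrix (Fin k) (Fin k) ℝ) : ℝ :=
  sSup (spectrum ℝ M)

/-- `S_B = B R⁻¹ Bᵀ`. -/
noncomputable def sMat {n m : ℕ} (R : Matrix (Fin m) (Fin m) ℝ)
    (B : Matrix (Fin n) (Fin m) ℝ) : Matrix (Fin n) (Fin n) ℝ :=
  B * R⁻¹ * Bᵀ

/-- Riccati map `𝓡_{A,B}(P) = Aᵀ P (I + S_B P)⁻¹ A + Q`. -/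
noncomputable def ric {n m : ℕ} (R : Matrix (Fin m) (Fin m) ℝ)
    (Q A : Matrix (Fin n) (Fin n) ℝ) (B : Matrix (Fin n) (Fin m) ℝ)
    (P : Matrix (Fin n) (Fin n) ℝ) : Matrix (Fin n) (Fin n) ℝ :=
  Aᵀ * P * (1 + sMat R B * P)⁻¹ * A + Q

/-- Riccati iterates: `𝓡^{(0)} = id`, `𝓡^{(i+1)} = 𝓡 ∘ 𝓡^{(i)}`. -/
noncomputable def ricIter {n m : ℕ} (R : Matrix (Fin m) (Fin m) ℝ)
    (Q A : Matrix (Fin n) (Fin n) ℝ) (B : Matrix (Fin n) (Fin m) ℝ) :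
    ℕ → Matrix (Fin n) (Fin n) ℝ → Matrix (Fin n) (Fin n) ℝ
  | 0, P => P
  | i + 1, P => ric R Q A B (ricIter R Q A B i P)

/-- Gain `𝓚_{A,B}(P) = (R + Bᵀ P B)⁻¹ Bᵀ P A`. -/
noncomputable def gain {n m : ℕ} (R : Matrix (Fin m) (Fin m) ℝ)
    (A : Matrix (Fin n) (Fin n) ℝ) (B : Matrix (Fin n) (Fin m) ℝ)
    (P : Matrix (Fin n) (Fin n) ℝ) : Matrix (Fin m) (Fin n) ℝ :=
  (R + Bᵀ * P * B)⁻¹ * (Bᵀ * P * A)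

/-- Closed loop matrix `𝓛_{A,B}(P) = (I + S_B P)⁻¹ A`. -/
noncomputable def clMat {n m : ℕ} (R : Matrix (Fin m) (Fin m) ℝ)
    (A : Matrix (Fin n) (Fin n) ℝ) (B : Matrix (Fin n) (Fin m) ℝ)
    (P : Matrix (Fin n) (Fin n) ℝ) : Matrix (Fin n) (Fin n) ℝ :=
  (1 + sMat R B * P)⁻¹ * A

/-- State transition matrix `Φ^{(j:i)}_{A,B}(P)`. -/
noncomputable def phiMat {n m : ℕ} (R : Matrix (Fin m) (Fin m) ℝ)
    (Q A : Matrix (Fin n) (Fin n) ℝ) (B : Matrix (Fin n) (Fin m) ℝ)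
    (P : Matrix (Fin n) (Fin n) ℝ) (j i : ℕ) : Matrix (Fin n) (Fin n) ℝ :=
  ((List.range (i - j)).map (fun k => clMat R A B (ricIter R Q A B (j + k) P))).prod

/-- Perturbed closed loop matrix `𝓛̄(P) = W(P)(H(P) + 𝓛_{A★,B★}(P))`. -/
noncomputable def lbarMat {n m : ℕ} (R : Matrix (Fin m) (Fin m) ℝ)
    (As : Matrix (Fin n) (Fin n) ℝ) (Bs : Matrix (Fin n) (Fin m) ℝ)
    (Ah : Matrix (Fin n) (Fin n) ℝ) (Bh : Matrix (Fin n) (Fin m) ℝ)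
    (P : Matrix (Fin n) (Fin n) ℝ) : Matrix (Fin n) (Fin n) ℝ :=
  (1 + (sMat R Bs - sMat R Bh) * P) *
    ((1 + sMat R Bs * P)⁻¹ * (Ah - As) + clMat R As Bs P)

/-- Perturbed state transition matrix `Φ̄^{(j:i)}(P)`. -/
noncomputable def phibarMat {n m : ℕ} (R : Matrix (Fin m) (Fin m) ℝ)
    (Q As : Matrix (Fin n) (Fin n) ℝ) (Bs : Matrix (Fin n) (Fin m) ℝ)
    (Ah : Matrix (Fin n) (Fin n) ℝ) (Bh : Matrix (Fin n) (Fin m) ℝ)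
    (P : Matrix (Fin n) (Fin n) ℝ) (j i : ℕ) : Matrix (Fin n) (Fin n) ℝ :=
  ((List.range (i - j)).map
    (fun k => lbarMat R As Bs Ah Bh (ricIter R Q As Bs (j + k) P))).prod

/-- The map `𝓜(P₁,P₂)`. -/
noncomputable def mMat {n m : ℕ} (R : Matrix (Fin m) (Fin m) ℝ)
    (As : Matrix (Fin n) (Fin n) ℝ) (Bs : Matrix (Fin n) (Fin m) ℝ)
    (Ah : Matrix (Fin n) (Fin n) ℝ) (Bh : Matrix (Fin n) (Fin m) ℝ)
    (P1 P2 : Matrix (Fin n) (Fin n) ℝ) : Matrix (Fin n) (Fin n) ℝ :=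
  Ahᵀ * P2 * (1 + sMat R Bs * P2)⁻¹ * Ah - Asᵀ * P2 * (1 + sMat R Bs * P2)⁻¹ * As
    + Ahᵀ * (1 + P1 * sMat R Bh)⁻¹ * P2 * (sMat R Bs - sMat R Bh) * P2 *
        (1 + sMat R Bs * P2)⁻¹ * Ah

/-- `β★ = σ_max(P★)/σ_min(Q)`. -/
noncomputable def betaStar {n : ℕ} (Q Pstar : Matrix (Fin n) (Fin n) ℝ) : ℝ :=
  maxEig Pstar / minEig Q

/-- `ψ(ε_m, ε_p)`. -/
noncomputable def psiF (U b em ep : ℝ) : ℝ :=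
  em * (1 + (em + 2 * U) ^ 2 * (b * ep + U))

/-- `γ₁(ε_m, ε_p)`. -/
noncomputable def gamma1F (U b em ep : ℝ) : ℝ :=
  Real.sqrt b * psiF U b em ep + Real.sqrt (1 - b⁻¹)

/-- `α_{ε_m} = (1 − 8‖P★‖² ε_m)^{−1/2}`, with `p = ‖P★‖`. -/
noncomputable def alphaF (p em : ℝ) : ℝ :=
  (1 - 8 * p ^ 2 * em) ^ (-(1 / 2) : ℝ)

/-- `γ₂(ε_m)`. -/
noncomputable def gamma2F (p b em : ℝ) : ℝ :=
  Real.sqrt (1 - (alphaF p em)⁻¹ * b⁻¹)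

/-- `ψ̃(ε_m)`. -/
noncomputable def psitF (U em : ℝ) : ℝ :=
  (em ^ 2 + 2 * U * em) * (U + (em + U) ^ 2 * U ^ 2)

/-- `Ê(ε_m, ε_p, i)`. -/
noncomputable def ehatF (p U b em ep : ℝ) (i : ℕ) : ℝ :=
  Real.sqrt (alphaF p em) * b *
    ((gamma1F U b em ep * gamma2F p b em) ^ i * ep +
      psitF U em * ((1 - (gamma1F U b em ep * gamma2F p b em) ^ i) /
        (1 - gamma1F U b em ep * gamma2F p b em)))

/-- `g(N, ε_m, ε_p)` with `r = σ_max(R)`, `p = ‖P★‖`, `b = β★`. -/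
noncomputable def gF (m : ℕ) (σw r U p b em ep : ℝ) (N : ℕ) : ℝ :=
  128 * (m : ℝ) * σw ^ 2 * (r + U ^ 3) * U ^ 4 * p ^ 2 *
    (em + ehatF p U b em ep (N - 1)) ^ 2

/-- The Lyapunov equation `Σ = (A−BK) Σ (A−BK)ᵀ + σ_w² I`. -/
def LyapEq {n m : ℕ} (As : Matrix (Fin n) (Fin n) ℝ) (Bs : Matrix (Fin n) (Fin m) ℝ)
    (K : Matrix (Fin m) (Fin n) ℝ) (σw : ℝ) (S : Matrix (Fin n) (Fin n) ℝ) : Prop :=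
  S = (As - Bs * K) * S * (As - Bs * K)ᵀ + σw ^ 2 • (1 : Matrix (Fin n) (Fin n) ℝ)

/-- `J_K = tr((Q + Kᵀ R K) Σ)`. -/
noncomputable def lqCost {n m : ℕ} (R : Matrix (Fin m) (Fin m) ℝ)
    (Q : Matrix (Fin n) (Fin n) ℝ) (K : Matrix (Fin m) (Fin n) ℝ)
    (S : Matrix (Fin n) (Fin n) ℝ) : ℝ :=
  ((Q + Kᵀ * R * K) * S).trace

/-! Write `S = S_B` and `𝓡(P) = Aᵀ M(P) A + Q` with `M(P) = P (I + S P)⁻¹`. Since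
`X (I + S Y) - (I + X S) Y = X - Y` and `X (I + S X)⁻¹ = (I + X S)⁻¹ X`, one step of the
Riccati map satisfies `𝓡(X) - 𝓡(Y) = 𝓛(X)ᵀ (X - Y) 𝓛(Y)`; unrolling this along the two
trajectories gives the claim. The inverses exist along the trajectories because `𝓡` preserves
positive semidefiniteness and `I + S P` is invertible for `S, P ⪰ 0`: with `P = Cᴴ C`,
`det (I + S Cᴴ C) = det (I + C S Cᴴ) > 0` and `M(P) = Cᴴ (I + C S Cᴴ)⁻¹ C ⪰ 0`. -/

open scoped MatrixOrder ComplexOrder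

namespace Matrix

variable {n : Type*}

theorem PosSemidef.transpose_eq {P : Matrix n n ℝ} (hP : P.PosSemidef) : Pᵀ = P :=
  (isHermitian_iff_isSymm.mp hP.isHermitian).eq

variable [Fintype n] [DecidableEq n]

section CommRing

variable {α : Type*} [CommRing α] {S X Y : Matrix n n α}

theorem mul_nonsing_inv_one_add_mul (h : IsUnit (1 + S * X).det) :
    X * (1 + S * X)⁻¹ = (1 + X * S)⁻¹ * X := by
  have h' : IsUnit (1 + X * S).det := by rwa [det_one_add_mul_comm]
  have hcomm : (1 + X * S) * X = X * (1 + S * X) := by noncomm_ring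
  calc X * (1 + S * X)⁻¹ = (1 + X * S)⁻¹ * ((1 + X * S) * X) * (1 + S * X)⁻¹ := by
        rw [nonsing_inv_mul_cancel_left _ _ h']
    _ = (1 + X * S)⁻¹ * X := by
        rw [hcomm, ← Matrix.mul_assoc, mul_nonsing_inv_cancel_right _ _ h]

theorem mul_nonsing_inv_one_add_mul_sub (hX : IsUnit (1 + S * X).det)
    (hY : IsUnit (1 + S * Y).det) :
    X * (1 + S * X)⁻¹ - Y * (1 + S * Y)⁻¹ =
      (1 + X * S)⁻¹ * (X - Y) * (1 + S * Y)⁻¹ := by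
  have hX' : IsUnit (1 + X * S).det := by rwa [det_one_add_mul_comm]
  have hsplit : X - Y = X * (1 + S * Y) - (1 + X * S) * Y := by noncomm_ring
  rw [hsplit, Matrix.mul_sub, Matrix.sub_mul, ← Matrix.mul_assoc,
    mul_nonsing_inv_cancel_right _ _ hY, nonsing_inv_mul_cancel_left _ _ hX',
    mul_nonsing_inv_one_add_mul hX]

end CommRing

section RCLike

variable {𝕜 : Type*} [RCLike 𝕜] {S P : Matrix n n 𝕜}

theorem PosSemidef.exists_eq_conjTranspose_mul_self (hP : P.PosSemidef) :
    ∃ C : Matrix n n 𝕜, P = Cᴴ * C :=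
  CStarAlgebra.nonneg_iff_eq_star_mul_self.mp hP.nonneg

theorem PosSemidef.isUnit_det_one_add_mul (hS : S.PosSemidef) (hP : P.PosSemidef) :
    IsUnit (1 + S * P).det := by
  obtain ⟨C, rfl⟩ := hP.exists_eq_conjTranspose_mul_self
  have hpd : (1 + C * S * Cᴴ).PosDef :=
    PosDef.one.add_posSemidef (hS.mul_mul_conjTranspose_same C)
  rw [← Matrix.mul_assoc, det_one_add_mul_comm, ← Matrix.mul_assoc]
  exact hpd.isUnit.map detMonoidHom

theorem PosSemidef.mul_nonsing_inv_one_add_mul (hS : S.PosSemidef) (hP : P.PosSemidef) :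
    (P * (1 + S * P)⁻¹).PosSemidef := by
  have hunit := hS.isUnit_det_one_add_mul hP
  obtain ⟨C, rfl⟩ := hP.exists_eq_conjTranspose_mul_self
  have hpd : (1 + C * S * Cᴴ).PosDef :=
    PosDef.one.add_posSemidef (hS.mul_mul_conjTranspose_same C)
  have hpush : C * (1 + S * Cᴴ * C)⁻¹ = (1 + C * (S * Cᴴ))⁻¹ * C :=
    Matrix.mul_nonsing_inv_one_add_mul (by rwa [Matrix.mul_assoc])
  rw [Matrix.mul_assoc, ← Matrix.mul_assoc S, hpush, ← Matrix.mul_assoc, ← Matrix.mul_assoc C]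
  exact hpd.inv.posSemidef.conjTranspose_mul_mul_same C

end RCLike

end Matrix

section Riccati

variable {n m : ℕ} (R : Matrix (Fin m) (Fin m) ℝ) (Q A : Matrix (Fin n) (Fin n) ℝ)
  (B : Matrix (Fin n) (Fin m) ℝ)

theorem sMat_posSemidef (hR : R.PosDef) : (sMat R B).PosSemidef := by
  simpa [sMat, conjTranspose_eq_transpose_of_trivial] using
    hR.inv.posSemidef.mul_mul_conjTranspose_same B

theorem ric_posSemidef (hR : R.PosDef) (hQ : Q.PosSemidef) {P : Matrix (Fin n) (Fin n) ℝ}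
    (hP : P.PosSemidef) : (ric R Q A B P).PosSemidef := by
  have hM := (sMat_posSemidef R B hR).mul_nonsing_inv_one_add_mul hP
  rw [ric, Matrix.mul_assoc Aᵀ]
  simpa [conjTranspose_eq_transpose_of_trivial] using (hM.conjTranspose_mul_mul_same A).add hQ

theorem ricIter_posSemidef (hR : R.PosDef) (hQ : Q.PosSemidef) {P : Matrix (Fin n) (Fin n) ℝ}
    (hP : P.PosSemidef) (i : ℕ) : (ricIter R Q A B i P).PosSemidef := by
  induction i with
  | zero => exact hP
  | succ k ih => exact ric_posSemidef R Q A B hR hQ ih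

theorem transpose_clMat (hR : R.PosDef) {P : Matrix (Fin n) (Fin n) ℝ} (hP : P.PosSemidef) :
    (clMat R A B P)ᵀ = Aᵀ * (1 + P * sMat R B)⁻¹ := by
  rw [clMat, transpose_mul, transpose_nonsing_inv, transpose_add, transpose_one, transpose_mul,
    hP.transpose_eq, (sMat_posSemidef R B hR).transpose_eq]

theorem ric_sub_ric (hR : R.PosDef) {X Y : Matrix (Fin n) (Fin n) ℝ} (hX : X.PosSemidef)
    (hY : Y.PosSemidef) :
    ric R Q A B X - ric R Q A B Y = (clMat R A B X)ᵀ * (X - Y) * clMat R A B Y := by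
  have hS := sMat_posSemidef R B hR
  have hdiff := mul_nonsing_inv_one_add_mul_sub (hS.isUnit_det_one_add_mul hX)
    (hS.isUnit_det_one_add_mul hY)
  calc ric R Q A B X - ric R Q A B Y
      = Aᵀ * (X * (1 + sMat R B * X)⁻¹ - Y * (1 + sMat R B * Y)⁻¹) * A := by
        simp only [ric, add_sub_add_right_eq_sub, Matrix.mul_sub, Matrix.sub_mul,
          Matrix.mul_assoc]
    _ = (clMat R A B X)ᵀ * (X - Y) * clMat R A B Y := by
        rw [hdiff, transpose_clMat R A B hR hX, clMat]
        simp only [Matrix.mul_assoc]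

theorem phiMat_self (P : Matrix (Fin n) (Fin n) ℝ) (i : ℕ) : phiMat R Q A B P i i = 1 := by
  simp [phiMat]

theorem phiMat_zero_succ (P : Matrix (Fin n) (Fin n) ℝ) (i : ℕ) :
    phiMat R Q A B P 0 (i + 1) = phiMat R Q A B P 0 i * clMat R A B (ricIter R Q A B i P) := by
  simp [phiMat, List.range_succ]

end Riccati

theorem stmt8_general {n m : ℕ}
    (A : Matrix (Fin n) (Fin n) ℝ) (B : Matrix (Fin n) (Fin m) ℝ)
    (R : Matrix (Fin m) (Fin m) ℝ) (Q P1 P2 : Matrix (Fin n) (Fin n) ℝ)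
    (hR : R.PosDef) (hQ : Q.PosSemidef)
    (hP1 : P1.PosSemidef) (hP2 : P2.PosSemidef) :
    ∀ i : ℕ,
      ricIter R Q A B i P1 - ricIter R Q A B i P2 =
        (phiMat R Q A B P1 0 i)ᵀ * (P1 - P2) * phiMat R Q A B P2 0 i := by
  intro i
  induction i with
  | zero => simp [ricIter, phiMat_self]
  | succ k ih =>
    rw [ricIter, ricIter, ric_sub_ric R Q A B hR (ricIter_posSemidef R Q A B hR hQ hP1 k)
      (ricIter_posSemidef R Q A B hR hQ hP2 k), ih, phiMat_zero_succ, phiMat_zero_succ,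
      transpose_mul]
    simp only [Matrix.mul_assoc]

theorem stmt8 {n m : ℕ} (hn : 0 < n) (hm : 0 < m)
    (A : Matrix (Fin n) (Fin n) ℝ) (B : Matrix (Fin n) (Fin m) ℝ)
    (R : Matrix (Fin m) (Fin m) ℝ) (Q P1 P2 : Matrix (Fin n) (Fin n) ℝ)
    (hR : R.PosDef) (hQ : Q.PosSemidef)
    (hP1 : P1.PosSemidef) (hP2 : P2.PosSemidef) :
    ∀ i : ℕ,
      ricIter R Q A B i P1 - ricIter R Q A B i P2 =
        (phiMat R Q A B P1 0 i)ᵀ * (P1 - P2) * phiMat R Q A B P2 0 i :=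
  stmt8_general A B R Q P1 P2 hR hQ hP1 hP2
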